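/- arXiv:2404.14855 — 7 statements merged into one kernel-verified Lean document; each statement's English description precedes it below -/
import Mathlib

section
/- Let J ⊆ K and Y ⊆ Z be subspaces of ℝ^d. Then dim(K ∩ Z) − dim(K ∩ Y + J ∩ Z) = dim(J^⊥ ∩ Y^⊥) − dim(K^⊥ ∩ Y^⊥ + J^⊥ ∩ Z^⊥), where ⊥ denotes orthogonal complement in ℝ^d. -/
/-- part of Lemma `hierarchydim`.
For subspaces `J ≤ K` and `Y ≤ Z` of `ℝ^d`,
`dim(K ⊓ Z) − dim(K ⊓ Y + J ⊓ Z) = dim(Jᗮ ⊓ Yᗮ) − dim(Kᗮ ⊓ Yᗮ + Jᗮ ⊓ Zᗮ)`. -/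
theorem dim_inf_sup_eq_dim_orthogonal (d : ℕ)
    (J K Y Z : Submodule ℝ (EuclideanSpace ℝ (Fin d)))
    (hJK : J ≤ K) (hYZ : Y ≤ Z) :
    (Module.finrank ℝ ↥(K ⊓ Z) : ℤ) - Module.finrank ℝ ↥(K ⊓ Y ⊔ J ⊓ Z)
      = (Module.finrank ℝ ↥(Jᗮ ⊓ Yᗮ) : ℤ) - Module.finrank ℝ ↥(Kᗮ ⊓ Yᗮ ⊔ Jᗮ ⊓ Zᗮ) := by
  have horth : ∀ X : Submodule ℝ (EuclideanSpace ℝ (Fin d)),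
      Module.finrank ℝ ↥X + Module.finrank ℝ ↥Xᗮ = d := by
    intro X
    have := Submodule.finrank_add_finrank_orthogonal X
    simpa [finrank_euclideanSpace_fin] using this
  have hsup : ∀ X W : Submodule ℝ (EuclideanSpace ℝ (Fin d)),
      Module.finrank ℝ ↥(X ⊔ W) + Module.finrank ℝ ↥(X ⊓ W)
        = Module.finrank ℝ ↥X + Module.finrank ℝ ↥W :=
    fun X W => Submodule.finrank_sup_add_finrank_inf_eq X W
  -- rewrite intersections of orthogonals as orthogonals of sups
  have e1 : Jᗮ ⊓ Yᗮ = (J ⊔ Y)ᗮ := Submodule.inf_orthogonal J Y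
  have e2 : Kᗮ ⊓ Yᗮ = (K ⊔ Y)ᗮ := Submodule.inf_orthogonal K Y
  have e3 : Jᗮ ⊓ Zᗮ = (J ⊔ Z)ᗮ := Submodule.inf_orthogonal J Z
  have e4 : (K ⊔ Y)ᗮ ⊓ (J ⊔ Z)ᗮ = (K ⊔ Z)ᗮ := by
    rw [Submodule.inf_orthogonal]
    congr 1
    have : K ⊔ Y ⊔ (J ⊔ Z) = K ⊔ Z := by
      apply le_antisymm
      · exact sup_le (sup_le le_sup_left (hYZ.trans le_sup_right))
          (sup_le (hJK.trans le_sup_left) le_sup_right)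
      · exact sup_le (le_sup_left.trans le_sup_left) (le_sup_right.trans le_sup_right)
    exact this
  have e5 : (K ⊓ Y) ⊓ (J ⊓ Z) = J ⊓ Y := by
    apply le_antisymm
    · exact le_inf (inf_le_right.trans inf_le_left) (inf_le_left.trans inf_le_right)
    · exact le_inf (le_inf (inf_le_left.trans hJK) inf_le_right)
        (le_inf inf_le_left (inf_le_right.trans hYZ))
  have h1 := hsup (K ⊓ Y) (J ⊓ Z)
  rw [e5] at h1
  have h2 := hsup ((K ⊔ Y)ᗮ) ((J ⊔ Z)ᗮ)
  rw [e4] at h2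
  have h3 := hsup K Y
  have h4 := hsup J Z
  have h5 := hsup K Z
  have h6 := hsup J Y
  have o1 := horth (J ⊔ Y)
  have o2 := horth (K ⊔ Y)
  have o3 := horth (J ⊔ Z)
  have o4 := horth (K ⊔ Z)
  rw [e1, e2, e3]
  omega
end

section
/- For any four matrices R, S, T, U of compatible sizes over ℝ, rk(ST) − rk(STU) − rk(RST) + rk(RSTU) ≥ 0 (the Frobenius rank inequality). -/
open Module

lemma finrank_map_aux {n m : ℕ} (f : (Fin n → ℝ) →ₗ[ℝ] (Fin m → ℝ))
    (p q : Submodule ℝ (Fin n → ℝ)) (hpq : p ≤ q) :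
    finrank ℝ (q.map f) + finrank ℝ p ≤ finrank ℝ (p.map f) + finrank ℝ q := by
  have hker : ∀ r : Submodule ℝ (Fin n → ℝ),
      finrank ℝ (r.map f) + finrank ℝ (LinearMap.ker f ⊓ r : Submodule ℝ (Fin n → ℝ))
        = finrank ℝ r := by
    intro r
    have h1 := LinearMap.finrank_range_add_finrank_ker (f.domRestrict r)
    rw [LinearMap.range_domRestrict] at h1
    have h2 : finrank ℝ (LinearMap.ker (f.domRestrict r))
        = finrank ℝ (LinearMap.ker f ⊓ r : Submodule ℝ (Fin n → ℝ)) := by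
      rw [LinearMap.ker_domRestrict,
        show (LinearMap.ker f).comap r.subtype
            = (LinearMap.ker f ⊓ r).comap r.subtype from by ext x; simp [x.2]]
      exact (Submodule.comapSubtypeEquivOfLe inf_le_right).finrank_eq
    rw [h2] at h1
    exact h1
  have hp := hker p
  have hq := hker q
  have hmono : finrank ℝ (LinearMap.ker f ⊓ p : Submodule ℝ (Fin n → ℝ))
      ≤ finrank ℝ (LinearMap.ker f ⊓ q : Submodule ℝ (Fin n → ℝ)) :=
    Submodule.finrank_mono (inf_le_inf_left _ hpq)
  omega

/-- Frobenius rank inequality.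
For real matrices `R, S, T, U` of compatible sizes,
`rk(ST) − rk(STU) − rk(RST) + rk(RSTU) ≥ 0`. -/
theorem frobenius_rank_inequality (a b c e f : ℕ)
    (R : Matrix (Fin a) (Fin b) ℝ) (S : Matrix (Fin b) (Fin c) ℝ)
    (T : Matrix (Fin c) (Fin e) ℝ) (U : Matrix (Fin e) (Fin f) ℝ) :
    0 ≤ ((S * T).rank : ℤ) - ((S * T * U).rank : ℤ)
        - ((R * S * T).rank : ℤ) + ((R * S * T * U).rank : ℤ) := by
  have key := finrank_map_aux R.mulVecLin
      (LinearMap.range (S * T * U).mulVecLin) (LinearMap.range (S * T).mulVecLin)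
      (by rw [Matrix.mulVecLin_mul (S*T) U]; exact LinearMap.range_comp_le_range _ _)
  have h1 : (LinearMap.range (S * T * U).mulVecLin).map R.mulVecLin
      = LinearMap.range (R * S * T * U).mulVecLin := by
    rw [show R * S * T * U = R * (S * T * U) by
          simp [Matrix.mul_assoc],
      Matrix.mulVecLin_mul R (S * T * U), LinearMap.range_comp]
  have h2 : (LinearMap.range (S * T).mulVecLin).map R.mulVecLin
      = LinearMap.range (R * S * T).mulVecLin := by
    rw [show R * S * T = R * (S * T) by rw [Matrix.mul_assoc],
      Matrix.mulVecLin_mul R (S * T), LinearMap.range_comp]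
  rw [h1, h2] at key
  simp only [Matrix.rank]
  omega
end

section
/- For any four real matrices R, S, T, U of compatible sizes, rk(ST) − rk(STU) − rk(RST) + rk(RSTU) equals the dimension of the subspace proj_{col T}(row S) ∩ proj_{null RS}(null (TU)ᵀ), where proj_Z Y denotes the orthogonal projection of the subspace Y onto the subspace Z. -/
open Matrix

/-- The orthogonal projection of the subspace `Y` onto the subspace `Z`,
`proj_Z Y = Z ⊓ (Zᗮ ⊔ Y)`. -/
noncomputable def projSubspace {d : ℕ} (Z Y : Submodule ℝ (EuclideanSpace ℝ (Fin d))) :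
    Submodule ℝ (EuclideanSpace ℝ (Fin d)) :=
  Z ⊓ (Zᗮ ⊔ Y)

/-!
Write `A = col T ⊇ M = col TU` and `N = null S ⊆ K = null RS`. Rank-nullity for `S` and `RS`
restricted to `A` and `M` gives `rk(ST) = dim A - dim (A ⊓ N)` and its three analogues, so the
slack is `dim (A ⊓ K) - dim (A ⊓ N) - dim (M ⊓ K) + dim (M ⊓ N)`. Since `row S = Nᗮ` and
`null (TU)ᵀ = Mᗮ`, the subspace on the right is `(A ⊓ K) ⊓ ((A ⊓ N) ⊔ (M ⊓ K))ᗮ`, and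
`(A ⊓ N) ⊓ (M ⊓ K) = M ⊓ N` turns its dimension into exactly that alternating sum.
-/

open Module LinearMap

theorem Submodule.finrank_map_add_finrank_inf_ker {K V W : Type*} [DivisionRing K]
    [AddCommGroup V] [AddCommGroup W] [Module K V] [Module K W] [FiniteDimensional K V]
    (f : V →ₗ[K] W) (p : Submodule K V) :
    finrank K (p.map f) + finrank K ↥(p ⊓ ker f) = finrank K p := by
  have h := finrank_range_add_finrank_ker (f.domRestrict p)
  rwa [range_domRestrict, ker_domRestrict,
    (Submodule.equivMapOfInjective _ p.injective_subtype _).finrank_eq,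
    Submodule.map_comap_subtype] at h

theorem Submodule.orthogonal_inf {𝕜 E : Type*} [RCLike 𝕜] [NormedAddCommGroup E]
    [InnerProductSpace 𝕜 E] [FiniteDimensional 𝕜 E] (p q : Submodule 𝕜 E) :
    (p ⊓ q)ᗮ = pᗮ ⊔ qᗮ := by
  rw [← Submodule.orthogonal_orthogonal (pᗮ ⊔ qᗮ), ← Submodule.inf_orthogonal,
    Submodule.orthogonal_orthogonal, Submodule.orthogonal_orthogonal]

theorem projSubspace_orthogonal {d : ℕ} (Z Y : Submodule ℝ (EuclideanSpace ℝ (Fin d))) :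
    projSubspace Z Yᗮ = Z ⊓ (Z ⊓ Y)ᗮ := by
  rw [projSubspace, Submodule.orthogonal_inf]

theorem finrank_projSubspace_inf_projSubspace_add {d : ℕ}
    {A M K N : Submodule ℝ (EuclideanSpace ℝ (Fin d))} (hMA : M ≤ A) (hNK : N ≤ K) :
    finrank ℝ ↥(projSubspace A Nᗮ ⊓ projSubspace K Mᗮ) + finrank ℝ ↥(A ⊓ N)
        + finrank ℝ ↥(M ⊓ K) = finrank ℝ ↥(A ⊓ K) + finrank ℝ ↥(M ⊓ N) := by
  have hX : projSubspace A Nᗮ ⊓ projSubspace K Mᗮ = ((A ⊓ N) ⊔ (M ⊓ K))ᗮ ⊓ (A ⊓ K) := by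
    rw [projSubspace_orthogonal, projSubspace_orthogonal, ← Submodule.inf_orthogonal]
    ac_rfl
  have hle : (A ⊓ N) ⊔ (M ⊓ K) ≤ A ⊓ K :=
    sup_le (inf_le_inf_left A hNK) (inf_le_inf_right K hMA)
  have hinf : (A ⊓ N) ⊓ (M ⊓ K) = M ⊓ N := by
    rw [inf_inf_inf_comm, inf_of_le_right hMA, inf_of_le_left hNK]
  have hsup := Submodule.finrank_sup_add_finrank_inf_eq (A ⊓ N) (M ⊓ K)
  have hcompl := Submodule.finrank_add_inf_finrank_orthogonal hle
  rw [hinf] at hsup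
  rw [hX]
  omega

theorem Matrix.rank_eq_finrank_range_toEuclideanLin {𝕜 m n : Type*} [RCLike 𝕜] [Fintype m]
    [Fintype n] [DecidableEq n] (A : Matrix m n 𝕜) :
    A.rank = finrank 𝕜 (range (toEuclideanLin A)) :=
  A.rank_eq_finrank_range_toLin (PiLp.basisFun 2 𝕜 m) (PiLp.basisFun 2 𝕜 n)

theorem Matrix.rank_mul_add_finrank_range_inf_ker {𝕜 l m n : Type*} [RCLike 𝕜] [Fintype l]
    [Fintype m] [Fintype n] [DecidableEq m] [DecidableEq n] (A : Matrix l m 𝕜) (B : Matrix m n 𝕜) :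
    (A * B).rank + finrank 𝕜 ↥(range (toEuclideanLin B) ⊓ ker (toEuclideanLin A)) = B.rank := by
  rw [rank_eq_finrank_range_toEuclideanLin, rank_eq_finrank_range_toEuclideanLin,
    toLpLin_mul_same, range_comp]
  exact Submodule.finrank_map_add_finrank_inf_ker _ _

theorem Matrix.range_toEuclideanLin_transpose {m n : Type*} [Fintype m] [Fintype n]
    [DecidableEq m] [DecidableEq n] (A : Matrix m n ℝ) :
    range (toEuclideanLin Aᵀ) = (ker (toEuclideanLin A))ᗮ := by
  rw [← conjTranspose_eq_transpose_of_trivial, toEuclideanLin_conjTranspose_eq_adjoint,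
    orthogonal_ker]

theorem Matrix.ker_toEuclideanLin_transpose {m n : Type*} [Fintype m] [Fintype n]
    [DecidableEq m] [DecidableEq n] (A : Matrix m n ℝ) :
    ker (toEuclideanLin Aᵀ) = (range (toEuclideanLin A))ᗮ := by
  rw [← conjTranspose_eq_transpose_of_trivial, toEuclideanLin_conjTranspose_eq_adjoint,
    orthogonal_range]

/-- The slack in the Frobenius rank inequality equals the dimension
of `proj_{col T}(row S) ∩ proj_{null RS}(null (TU)ᵀ)`. -/
theorem frobenius_rank_slack_eq_dim (a b c e f : ℕ)
    (R : Matrix (Fin a) (Fin b) ℝ) (S : Matrix (Fin b) (Fin c) ℝ)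
    (T : Matrix (Fin c) (Fin e) ℝ) (U : Matrix (Fin e) (Fin f) ℝ) :
    ((S * T).rank : ℤ) - ((S * T * U).rank : ℤ)
        - ((R * S * T).rank : ℤ) + ((R * S * T * U).rank : ℤ)
      = (Module.finrank ℝ
          ↥(projSubspace (LinearMap.range (Matrix.toEuclideanLin T))
              (LinearMap.range (Matrix.toEuclideanLin Sᵀ))
            ⊓ projSubspace (LinearMap.ker (Matrix.toEuclideanLin (R * S)))
                (LinearMap.ker (Matrix.toEuclideanLin (T * U)ᵀ))) : ℤ) := by
  have hMA : range (toEuclideanLin (T * U)) ≤ range (toEuclideanLin T) := by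
    rw [toLpLin_mul_same]
    exact range_comp_le_range _ _
  have hNK : ker (toEuclideanLin S) ≤ ker (toEuclideanLin (R * S)) := by
    rw [toLpLin_mul_same]
    exact ker_le_ker_comp _ _
  have hST := rank_mul_add_finrank_range_inf_ker S T
  have hSTU := rank_mul_add_finrank_range_inf_ker S (T * U)
  have hRST := rank_mul_add_finrank_range_inf_ker (R * S) T
  have hRSTU := rank_mul_add_finrank_range_inf_ker (R * S) (T * U)
  have hslack := finrank_projSubspace_inf_projSubspace_add hMA hNK
  rw [Matrix.mul_assoc S, Matrix.mul_assoc (R * S), range_toEuclideanLin_transpose,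
    ker_toEuclideanLin_transpose]
  omega
end

section
/- Let W_1, ..., W_L be real matrices with W_j of size d_j × d_{j−1}, and for L ≥ k ≥ i ≥ 0 let W_{k∼i} = W_k W_{k−1} ⋯ W_{i+1} (with W_{k∼k} the identity on ℝ^{d_k}). Define A_{kji} = null W_{k+1∼j} ∩ col W_{j∼i} for L ≥ k ≥ j ≥ i ≥ 0 (with the convention W_{L+1∼j} = 0). Then A_{kji} = W_{j∼x} · A_{kxi} for all indices satisfying L ≥ k and k+1 ≥ j ≥ x ≥ i ≥ 0, where M·S denotes the image of subspace S under matrix M. -/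
open Matrix

/-- The subsequence matrix `W_{k∼i} = W_k W_{k−1} ⋯ W_{i+1}` of a linear neural network.
Here `W j` is the matrix of edge layer `j+1` (mapping unit layer `j` to unit layer `j+1`),
so `subseq d W i k` is the product of the edge-layer matrices carrying unit layer `i`
to unit layer `k`.  By convention `subseq d W k k` is the identity, and values with
`k < i` are junk. -/
noncomputable def subseq (d : ℕ → ℕ)
    (W : ∀ j : ℕ, Matrix (Fin (d (j + 1))) (Fin (d j)) ℝ) (i : ℕ) :
    (k : ℕ) → Matrix (Fin (d k)) (Fin (d i)) ℝ
  | 0 =>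
    if h : i = 0 then
      (1 : Matrix (Fin (d 0)) (Fin (d 0)) ℝ).submatrix id (Fin.cast (congrArg d h))
    else 0
  | k + 1 =>
    if h : i = k + 1 then
      (1 : Matrix (Fin (d (k + 1))) (Fin (d (k + 1))) ℝ).submatrix id (Fin.cast (congrArg d h))
    else W k * subseq d W i k

/-- The flow subspace `A_{kji} = null W_{k+1∼j} ∩ col W_{j∼i}`, a subspace of `ℝ^{d_j}`. -/
noncomputable def Aflow (d : ℕ → ℕ)
    (W : ∀ j : ℕ, Matrix (Fin (d (j + 1))) (Fin (d j)) ℝ) (k j i : ℕ) :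
    Submodule ℝ (Fin (d j) → ℝ) :=
  LinearMap.ker (Matrix.mulVecLin (subseq d W j (k + 1)))
    ⊓ LinearMap.range (Matrix.mulVecLin (subseq d W i j))


lemma subseq_self (d : ℕ → ℕ)
    (W : ∀ j : ℕ, Matrix (Fin (d (j + 1))) (Fin (d j)) ℝ) (k : ℕ) :
    subseq d W k k = 1 := by
  cases k <;> simp [subseq]

lemma subseq_comp (d : ℕ → ℕ)
    (W : ∀ j : ℕ, Matrix (Fin (d (j + 1))) (Fin (d j)) ℝ)
    {i j k : ℕ} (hij : i ≤ j) (hjk : j ≤ k) :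
    subseq d W i k = subseq d W j k * subseq d W i j := by
  induction k with
  | zero =>
    interval_cases j
    interval_cases i
    simp [subseq_self]
  | succ k ih =>
    rcases eq_or_lt_of_le hjk with rfl | h
    · simp [subseq_self]
    · have hjk' : j ≤ k := Nat.lt_succ_iff.mp h
      have hik : i ≠ k + 1 := by omega
      have hjk'' : j ≠ k + 1 := by omega
      rw [subseq, dif_neg hik, subseq, dif_neg hjk'', ih hjk', Matrix.mul_assoc]

lemma ker_inf_range_map {R : Type*} [CommRing R]
    {α β γ δ : Type*} [AddCommGroup α] [AddCommGroup β] [AddCommGroup γ] [AddCommGroup δ]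
    [Module R α] [Module R β] [Module R γ] [Module R δ]
    (a : β →ₗ[R] γ) (b : α →ₗ[R] β) (c : δ →ₗ[R] α) :
    LinearMap.ker a ⊓ LinearMap.range (b ∘ₗ c)
      = Submodule.map b (LinearMap.ker (a ∘ₗ b) ⊓ LinearMap.range c) := by
  ext v
  simp only [Submodule.mem_inf, LinearMap.mem_ker, LinearMap.mem_range, Submodule.mem_map,
    LinearMap.comp_apply]
  constructor
  · rintro ⟨hv, w, rfl⟩
    exact ⟨c w, ⟨hv, w, rfl⟩, rfl⟩
  · rintro ⟨u, ⟨hu, w, rfl⟩, rfl⟩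
    exact ⟨hu, w, rfl⟩

/-- Lemma `subspaceflow`.
`A_{kji} = W_{j∼x} · A_{kxi}` whenever `L ≥ k`, `k+1 ≥ j ≥ x ≥ i ≥ 0`.
The convention `W_{L+1∼j} = 0` is encoded by the hypothesis that all edge-layer
matrices above layer `L` vanish. -/
theorem flow_subspace_flows (L : ℕ) (d : ℕ → ℕ)
    (W : ∀ j : ℕ, Matrix (Fin (d (j + 1))) (Fin (d j)) ℝ)
    (hW : ∀ j, L ≤ j → W j = 0)
    (k j x i : ℕ) (hkL : k ≤ L) (hjk : j ≤ k + 1) (hxj : x ≤ j) (hix : i ≤ x) :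
    Aflow d W k j i = Submodule.map (Matrix.mulVecLin (subseq d W x j)) (Aflow d W k x i) := by
  have h1 : subseq d W x (k+1) = subseq d W j (k+1) * subseq d W x j :=
    subseq_comp d W hxj hjk
  have h2 : subseq d W i j = subseq d W x j * subseq d W i x :=
    subseq_comp d W hix hxj
  unfold Aflow
  rw [h1, h2, Matrix.mulVecLin_mul, Matrix.mulVecLin_mul]
  exact ker_inf_range_map _ _ _
end

section
/- With the flow subspaces A_{kji} = null W_{k+1∼j} ∩ col W_{j∼i} and B_{kji} = row W_{k∼j} ∩ null W_{j∼i−1}ᵀ of ℝ^{d_j} (using conventions A_{k,j,−1} = A_{j−1,j,i} = {0} and B_{k,j,j+1} = B_{L+1,j,i} = {0}), the quantities dim A_{kji} − dim(A_{k,j,i−1} + A_{k−1,j,i}) and dim B_{kji} − dim(B_{k,j,i+1} + B_{k+1,j,i}) are equal for all L ≥ k ≥ j ≥ i ≥ 0. -/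
open Matrix

/-- The flow subspace `B_{kji} = row W_{k∼j} ∩ null W_{j∼i−1}ᵀ` of the transpose network,
a subspace of `ℝ^{d_j}`.  The convention `W_{j∼−1} = 0` (so `null W_{j∼−1}ᵀ = ℝ^{d_j}`)
is encoded by the `i = 0` case. -/
noncomputable def Bflow (d : ℕ → ℕ)
    (W : ∀ j : ℕ, Matrix (Fin (d (j + 1))) (Fin (d j)) ℝ) (k j i : ℕ) :
    Submodule ℝ (Fin (d j) → ℝ) :=
  LinearMap.range (Matrix.mulVecLin (subseq d W j k)ᵀ)
    ⊓ (if i = 0 then ⊤ else LinearMap.ker (Matrix.mulVecLin (subseq d W (i - 1) j)ᵀ))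

variable {d : ℕ → ℕ} {W : ∀ j : ℕ, Matrix (Fin (d (j + 1))) (Fin (d j)) ℝ}

lemma subseq_self_s5 (b : ℕ) : subseq d W b b = 1 := by
  cases b with
  | zero => simp [subseq]
  | succ b => simp [subseq]

lemma subseq_succ {j k : ℕ} (h : j ≤ k) :
    subseq d W j (k + 1) = W k * subseq d W j k := by
  rw [subseq, dif_neg (by omega)]

lemma subseq_mul {a b c : ℕ} (hab : a ≤ b) (hbc : b ≤ c) :
    subseq d W b c * subseq d W a b = subseq d W a c := by
  induction c with
  | zero =>
    have hb : b = 0 := Nat.le_zero.mp hbc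
    subst hb; rw [subseq_self_s5, Matrix.one_mul]
  | succ c ih =>
    by_cases h : b = c + 1
    · subst h; rw [subseq_self_s5, Matrix.one_mul]
    · have hbc' : b ≤ c := by omega
      rw [subseq_succ hbc', Matrix.mul_assoc, ih hbc', subseq_succ (hab.trans hbc')]

lemma finrank_ker_inf_range {m n p : ℕ} (M : Matrix (Fin m) (Fin n) ℝ)
    (N : Matrix (Fin n) (Fin p) ℝ) :
    Module.finrank ℝ ↥(LinearMap.ker M.mulVecLin ⊓ LinearMap.range N.mulVecLin)
      + (M * N).rank = N.rank := by
  set f := N.mulVecLin with hf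
  set g := M.mulVecLin with hg
  have h := LinearMap.finrank_range_add_finrank_ker (g.domRestrict (LinearMap.range f))
  rw [LinearMap.range_domRestrict, LinearMap.ker_domRestrict] at h
  have e1 : Submodule.map g (LinearMap.range f) = LinearMap.range (M * N).mulVecLin := by
    rw [Matrix.mulVecLin_mul, LinearMap.range_comp]
  have e2 : Submodule.comap (LinearMap.range f).subtype (LinearMap.ker g)
      = Submodule.comap (LinearMap.range f).subtype (LinearMap.ker g ⊓ LinearMap.range f) := by
    rw [Submodule.comap_inf, Submodule.comap_subtype_self, inf_top_eq]
  have e3 : Module.finrank ℝ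
        ↥(Submodule.comap (LinearMap.range f).subtype (LinearMap.ker g ⊓ LinearMap.range f))
      = Module.finrank ℝ ↥(LinearMap.ker g ⊓ LinearMap.range f) :=
    (Submodule.comapSubtypeEquivOfLe inf_le_right).finrank_eq
  rw [e1, e2, e3] at h
  simp only [Matrix.rank]
  rw [← hf]
  omega

lemma inf_helper {α : Type*} [Lattice α] {a a' b b' : α} (ha : a' ≤ a) (hb : b ≤ b') :
    (a ⊓ b) ⊓ (a' ⊓ b') = a' ⊓ b := by
  apply le_antisymm
  · exact le_inf (inf_le_right.trans inf_le_left) (inf_le_left.trans inf_le_right)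
  · exact le_inf (le_inf ((inf_le_left).trans ha) inf_le_right)
      (le_inf inf_le_left (inf_le_right.trans hb))

lemma finrank_Aflow {k j i : ℕ} (hij : i ≤ j) (hjk : j ≤ k + 1) :
    Module.finrank ℝ ↥(Aflow d W k j i) + (subseq d W i (k + 1)).rank
      = (subseq d W i j).rank := by
  unfold Aflow
  have h := finrank_ker_inf_range (subseq d W j (k + 1)) (subseq d W i j)
  rwa [subseq_mul hij hjk] at h

lemma finrank_Bflow_zero (k j : ℕ) :
    Module.finrank ℝ ↥(Bflow d W k j 0) = (subseq d W j k).rank := by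
  unfold Bflow
  rw [if_pos rfl, inf_top_eq, ← Matrix.rank_transpose (subseq d W j k)]
  rfl

lemma finrank_Bflow_succ {k j i : ℕ} (hij : i ≤ j) (hjk : j ≤ k) :
    Module.finrank ℝ ↥(Bflow d W k j (i + 1)) + (subseq d W i k).rank
      = (subseq d W j k).rank := by
  unfold Bflow
  rw [if_neg (Nat.succ_ne_zero i)]
  have h := finrank_ker_inf_range (subseq d W i j)ᵀ (subseq d W j k)ᵀ
  rw [← Matrix.transpose_mul, subseq_mul hij hjk, Matrix.rank_transpose,
    Matrix.rank_transpose] at h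
  rw [inf_comm] at h
  simpa [Nat.add_sub_cancel] using h

lemma ker_subseq_le {j k : ℕ} (hjk : j ≤ k) :
    LinearMap.ker (subseq d W j k).mulVecLin
      ≤ LinearMap.ker (subseq d W j (k + 1)).mulVecLin := by
  rw [subseq_succ hjk, Matrix.mulVecLin_mul]
  exact LinearMap.ker_le_ker_comp _ _

lemma range_subseq_le {a b j : ℕ} (hab : a ≤ b) (hbj : b ≤ j) :
    LinearMap.range (subseq d W a j).mulVecLin
      ≤ LinearMap.range (subseq d W b j).mulVecLin := by
  rw [← subseq_mul hab hbj, Matrix.mulVecLin_mul]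
  exact LinearMap.range_comp_le_range _ _

lemma rangeT_subseq_le {j k : ℕ} (hjk : j ≤ k) :
    LinearMap.range (subseq d W j (k + 1))ᵀ.mulVecLin
      ≤ LinearMap.range (subseq d W j k)ᵀ.mulVecLin := by
  rw [subseq_succ hjk, Matrix.transpose_mul, Matrix.mulVecLin_mul]
  exact LinearMap.range_comp_le_range _ _

lemma kerT_subseq_le {a b j : ℕ} (hab : a ≤ b) (hbj : b ≤ j) :
    LinearMap.ker ((subseq d W b j)ᵀ.mulVecLin)
      ≤ LinearMap.ker ((subseq d W a j)ᵀ.mulVecLin) := by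
  rw [← subseq_mul hab hbj, Matrix.transpose_mul, Matrix.mulVecLin_mul]
  exact LinearMap.ker_le_ker_comp _ _

lemma Aflow_inf {k j i : ℕ} (hij : i + 1 ≤ j) (hjk : j ≤ k + 1) :
    Aflow d W (k + 1) j i ⊓ Aflow d W k j (i + 1) = Aflow d W k j i := by
  unfold Aflow
  exact inf_helper (ker_subseq_le hjk) (range_subseq_le (Nat.le_succ i) hij)

lemma Bflow_inf {k j i : ℕ} (hij : i ≤ j) (hjk : j ≤ k) :
    Bflow d W k j (i + 1) ⊓ Bflow d W (k + 1) j i = Bflow d W (k + 1) j (i + 1) := by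
  unfold Bflow
  have h0 : ((i + 1 = 0) = False) := by simp
  simp only [h0, if_false, Nat.add_sub_cancel]
  refine inf_helper (rangeT_subseq_le hjk) ?_
  split
  · exact le_top
  · exact kerT_subseq_le (Nat.sub_le i 1) hij

/-- Lemma `subspacedim`.
For `L ≥ k ≥ j ≥ i ≥ 0`,
`dim A_{kji} − dim(A_{k,j,i−1} + A_{k−1,j,i}) = dim B_{kji} − dim(B_{k,j,i+1} + B_{k+1,j,i})`,
with the conventions `A_{k,j,−1} = A_{j−1,j,i} = {0}` and
`B_{k,j,j+1} = B_{L+1,j,i} = {0}` (the latter via `hW`). -/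
theorem prebasis_subspace_dims_eq (L : ℕ) (d : ℕ → ℕ)
    (W : ∀ j : ℕ, Matrix (Fin (d (j + 1))) (Fin (d j)) ℝ)
    (hW : ∀ j, L ≤ j → W j = 0)
    (k j i : ℕ) (hij : i ≤ j) (hjk : j ≤ k) (hkL : k ≤ L) :
    (Module.finrank ℝ ↥(Aflow d W k j i) : ℤ)
        - Module.finrank ℝ
            ↥((if i = 0 then (⊥ : Submodule ℝ (Fin (d j) → ℝ)) else Aflow d W k j (i - 1))
              ⊔ (if k = 0 then (⊥ : Submodule ℝ (Fin (d j) → ℝ)) else Aflow d W (k - 1) j i))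
      = (Module.finrank ℝ ↥(Bflow d W k j i) : ℤ)
          - Module.finrank ℝ ↥(Bflow d W k j (i + 1) ⊔ Bflow d W (k + 1) j i) := by
  have hBint := Bflow_inf (d := d) (W := W) hij hjk
  have hBsup := Submodule.finrank_sup_add_finrank_inf_eq
    (Bflow d W k j (i + 1)) (Bflow d W (k + 1) j i)
  rw [hBint] at hBsup
  by_cases hi : i = 0
  · rw [if_pos hi]
    subst hi
    have hB1 := finrank_Bflow_zero (d := d) (W := W) k j
    have hB2 := finrank_Bflow_succ (d := d) (W := W) (Nat.zero_le j) hjk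
    have hB3 := finrank_Bflow_zero (d := d) (W := W) (k + 1) j
    have hB4 := finrank_Bflow_succ (d := d) (W := W) (i := 0) (k := k + 1) (Nat.zero_le j)
      (hjk.trans (Nat.le_succ k))
    have hA1 := finrank_Aflow (d := d) (W := W) (Nat.zero_le j) (hjk.trans (Nat.le_succ k))
    by_cases hk : k = 0
    · rw [if_pos hk]
      subst hk
      have hj0 : j = 0 := Nat.le_zero.mp hjk
      subst hj0
      rw [bot_sup_eq]
      have hb : Module.finrank ℝ (⊥ : Submodule ℝ (Fin (d 0) → ℝ)) = 0 := finrank_bot ℝ _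
      omega
    · rw [if_neg hk]
      obtain ⟨k'', rfl⟩ : ∃ k'', k = k'' + 1 := ⟨k - 1, by omega⟩
      have hA2 := finrank_Aflow (d := d) (W := W) (i := 0) (k := k'') (Nat.zero_le j) hjk
      rw [Nat.add_sub_cancel, bot_sup_eq]
      omega
  · rw [if_neg hi]
    have hk : k ≠ 0 := by omega
    rw [if_neg hk]
    obtain ⟨i', rfl⟩ : ∃ i', i = i' + 1 := ⟨i - 1, by omega⟩
    obtain ⟨k'', rfl⟩ : ∃ k'', k = k'' + 1 := ⟨k - 1, by omega⟩
    rw [Nat.add_sub_cancel, Nat.add_sub_cancel]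
    have hA1 := finrank_Aflow (d := d) (W := W) (k := k'' + 1) hij (by omega)
    have hA2 := finrank_Aflow (d := d) (W := W) (k := k'' + 1) (Nat.le_of_succ_le hij)
      (by omega)
    have hA3 := finrank_Aflow (d := d) (W := W) (k := k'') hij hjk
    have hA4 := finrank_Aflow (d := d) (W := W) (k := k'') (Nat.le_of_succ_le hij) hjk
    have hAint := Aflow_inf (d := d) (W := W) (i := i') (k := k'') hij hjk
    have hAsup := Submodule.finrank_sup_add_finrank_inf_eq
      (Aflow d W (k'' + 1) j i') (Aflow d W k'' j (i' + 1))
    rw [hAint] at hAsup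
    have hB1 := finrank_Bflow_succ (d := d) (W := W) (k := k'' + 1)
      (Nat.le_of_succ_le hij) hjk
    have hB2 := finrank_Bflow_succ (d := d) (W := W) (k := k'' + 1) hij hjk
    have hB3 := finrank_Bflow_succ (d := d) (W := W) (k := k'' + 1 + 1)
      (Nat.le_of_succ_le hij) (by omega)
    have hB4 := finrank_Bflow_succ (d := d) (W := W) (k := k'' + 1 + 1) hij (by omega)
    omega
end

section
/- Let S_r and S_s be the sets of weight vectors θ = (W_L, ..., W_1) in the fiber μ^{-1}(W) whose rank lists are r and s respectively (both assumed nonempty). If S_r intersects the closure of S_s (in the Euclidean topology on the weight space), then r_{k∼i} ≤ s_{k∼i} for all L ≥ k ≥ i ≥ 0. -/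
open Matrix

/-! Matrix rank is lower semicontinuous, so `{A | rk A ≤ s}` is closed. Since `W_{k∼i}` depends
continuously on the weights, `{φ | rk W_{k∼i}(φ) ≤ s_{k∼i}}` is a closed set containing the
stratum `S_s`, hence also its closure. -/

namespace Matrix

variable {𝕜 : Type*} [NontriviallyNormedField 𝕜] [CompleteSpace 𝕜]
  {m n : Type*} [Fintype m] [Fintype n]

theorem isOpen_setOf_le_rank (k : ℕ) : IsOpen {A : Matrix m n 𝕜 | k ≤ A.rank} := by
  classical
  let toCLM : Matrix m n 𝕜 →ₗ[𝕜] (n → 𝕜) →L[𝕜] (m → 𝕜) :=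
    LinearMap.toContinuousLinearMap.toLinearMap ∘ₗ Matrix.toLin'.toLinearMap
  convert (isOpen_setOfPred_nat_le_rank k).preimage toCLM.continuous_of_finiteDimensional using 1
  refine Set.ext fun A => ?_
  change k ≤ A.rank ↔ (k : Cardinal) ≤ (Matrix.toLin' A).rank
  rw [LinearMap.rank, ← Module.finrank_eq_rank, Nat.cast_le, Matrix.toLin'_apply', Matrix.rank]

theorem isClosed_setOf_rank_le (k : ℕ) : IsClosed {A : Matrix m n 𝕜 | A.rank ≤ k} := by
  convert (isOpen_setOf_le_rank (m := m) (n := n) (𝕜 := 𝕜) (k + 1)).isClosed_compl using 1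
  refine Set.ext fun A => ?_
  simp only [Set.mem_ofPred_eq, Set.mem_compl_iff, not_le]
  omega

end Matrix

theorem continuous_subseq (d : ℕ → ℕ) (i k : ℕ) :
    Continuous fun φ : ∀ j : ℕ, Matrix (Fin (d (j + 1))) (Fin (d j)) ℝ => subseq d φ i k := by
  induction k with
  | zero =>
    unfold subseq
    split_ifs <;> exact continuous_const
  | succ k ih =>
    unfold subseq
    split_ifs
    · exact continuous_const
    · exact (continuous_apply k).matrix_mul ih

theorem rank_list_le_of_mem_closure_general (L : ℕ) (d : ℕ → ℕ)
    (Wmat : Matrix (Fin (d L)) (Fin (d 0)) ℝ)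
    (r s : ℕ → ℕ → ℕ)
    (θ : ∀ j : ℕ, Matrix (Fin (d (j + 1))) (Fin (d j)) ℝ)
    (hθrank : ∀ k i, i ≤ k → k ≤ L → (subseq d θ i k).rank = r k i)
    (hclos : θ ∈ closure {φ : ∀ j : ℕ, Matrix (Fin (d (j + 1))) (Fin (d j)) ℝ |
        subseq d φ 0 L = Wmat ∧ ∀ k i, i ≤ k → k ≤ L → (subseq d φ i k).rank = s k i}) :
    ∀ k i, i ≤ k → k ≤ L → r k i ≤ s k i := by
  intro k i hik hkL
  have hclosed : IsClosed {φ | (subseq d φ i k).rank ≤ s k i} :=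
    (Matrix.isClosed_setOf_rank_le _).preimage (continuous_subseq d i k)
  have hθ : θ ∈ {φ | (subseq d φ i k).rank ≤ s k i} :=
    closure_minimal (fun φ hφ => (hφ.2 k i hik hkL).le) hclosed hclos
  exact hθrank k i hik hkL ▸ hθ

/-- Lemma `stratatouch`.
If a point `θ` of the fiber `μ⁻¹(W)` has rank list `r` and lies in the closure of
the set of points of the fiber with rank list `s`, then `r_{k∼i} ≤ s_{k∼i}` for all
`L ≥ k ≥ i ≥ 0`. -/
theorem rank_list_le_of_mem_closure (L : ℕ) (d : ℕ → ℕ)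
    (Wmat : Matrix (Fin (d L)) (Fin (d 0)) ℝ)
    (r s : ℕ → ℕ → ℕ)
    (θ : ∀ j : ℕ, Matrix (Fin (d (j + 1))) (Fin (d j)) ℝ)
    (hθfib : subseq d θ 0 L = Wmat)
    (hθrank : ∀ k i, i ≤ k → k ≤ L → (subseq d θ i k).rank = r k i)
    (hclos : θ ∈ closure {φ : ∀ j : ℕ, Matrix (Fin (d (j + 1))) (Fin (d j)) ℝ |
        subseq d φ 0 L = Wmat ∧ ∀ k i, i ≤ k → k ≤ L → (subseq d φ i k).rank = s k i}) :
    ∀ k i, i ≤ k → k ≤ L → r k i ≤ s k i :=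
  rank_list_le_of_mem_closure_general L d Wmat r s θ hθrank hclos
end

section
/- The image of the differential map dμ(θ) at θ = (W_L, ..., W_1) equals the vector sum Σ_{j=1}^{L} col(W_{L∼j}) ⊗ row(W_{j−1∼0}) of matrix subspaces of ℝ^{d_L × d_0}, where U ⊗ V = {M : col M ⊆ U, row M ⊆ V}. -/
open Matrix

/-- The tensor product of subspaces `U ⊆ ℝ^p`, `V ⊆ ℝ^q`:
`U ⊗ V = {M ∈ ℝ^{p×q} : col M ⊆ U and row M ⊆ V}`. -/
def matSub {p q : ℕ} (U : Submodule ℝ (Fin p → ℝ)) (V : Submodule ℝ (Fin q → ℝ)) :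
    Submodule ℝ (Matrix (Fin p) (Fin q) ℝ) where
  carrier := {M | (∀ v, M.mulVec v ∈ U) ∧ ∀ v, Mᵀ.mulVec v ∈ V}
  add_mem' := by
    intro a b ha hb
    refine ⟨fun v => ?_, fun v => ?_⟩
    · rw [Matrix.add_mulVec]
      exact U.add_mem (ha.1 v) (hb.1 v)
    · rw [Matrix.transpose_add, Matrix.add_mulVec]
      exact V.add_mem (ha.2 v) (hb.2 v)
  zero_mem' := by
    refine ⟨fun v => ?_, fun v => ?_⟩
    · rw [Matrix.zero_mulVec]
      exact U.zero_mem
    · rw [Matrix.transpose_zero, Matrix.zero_mulVec]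
      exact V.zero_mem
  smul_mem' := by
    intro c a ha
    refine ⟨fun v => ?_, fun v => ?_⟩
    · rw [Matrix.smul_mulVec]
      exact U.smul_mem c (ha.1 v)
    · rw [Matrix.transpose_smul, Matrix.smul_mulVec]
      exact V.smul_mem c (ha.2 v)

/-- The differential map `dμ(θ) : (ΔW_L, …, ΔW_1) ↦ Σ_{j=1}^{L} W_{L∼j} ΔW_j W_{j−1∼0}`
of the matrix multiplication map at `θ = (W_L, …, W_1)`, as a linear map from the
weight space to `ℝ^{d_L × d_0}`.  Edge layer `j` of the paper is index `j0 = j − 1`. -/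
noncomputable def dmu (L : ℕ) (d : ℕ → ℕ)
    (W : ∀ j : ℕ, Matrix (Fin (d (j + 1))) (Fin (d j)) ℝ) :
    (∀ j0 : Fin L, Matrix (Fin (d (j0.1 + 1))) (Fin (d j0.1)) ℝ)
      →ₗ[ℝ] Matrix (Fin (d L)) (Fin (d 0)) ℝ where
  toFun Δ := ∑ j0 : Fin L, subseq d W (j0.1 + 1) L * Δ j0 * subseq d W 0 j0.1
  map_add' a b := by
    simp only [Pi.add_apply, Matrix.mul_add, Matrix.add_mul]
    rw [Finset.sum_add_distrib]
  map_smul' c a := by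
    simp only [Pi.smul_apply, Matrix.mul_smul, Matrix.smul_mul, RingHom.id_apply]
    rw [Finset.smul_sum]

/-!
`dμ(θ)` is a sum of the maps `ΔW_j ↦ W_{L∼j} ΔW_j W_{j−1∼0}`, each acting on its own coordinate
of the weight space, so its image is the sum of their images. The image of `Δ ↦ A Δ B` is
`col A ⊗ row B`: if `col M ⊆ col A` and `row M ⊆ row B`, choose generalized inverses with
`A G A = A` and `Bᵀ H Bᵀ = Bᵀ`; then `A G` fixes the columns of `M` and `Hᵀ B` fixes its rows,
so `M = A (G M Hᵀ) B`.
-/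

theorem LinearMap.exists_comp_comp_eq_self {K V W : Type*} [DivisionRing K]
    [AddCommGroup V] [Module K V] [AddCommGroup W] [Module K W] (f : V →ₗ[K] W) :
    ∃ g : W →ₗ[K] V, f ∘ₗ g ∘ₗ f = f := by
  obtain ⟨s, hs⟩ := f.rangeRestrict.exists_rightInverse_of_surjective f.range_rangeRestrict
  obtain ⟨g, hg⟩ := LinearMap.exists_extend s
  refine ⟨g, ?_⟩
  calc f ∘ₗ g ∘ₗ f = (range f).subtype ∘ₗ (f.rangeRestrict ∘ₗ (g ∘ₗ (range f).subtype))
        ∘ₗ f.rangeRestrict := rfl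
    _ = f := by rw [hg, hs]; rfl

theorem Matrix.exists_mul_mul_eq_self {K m n : Type*} [Field K] [Fintype m] [Fintype n]
    [DecidableEq m] [DecidableEq n] (A : Matrix m n K) : ∃ G : Matrix n m K, A * G * A = A := by
  obtain ⟨g, hg⟩ := A.toLin'.exists_comp_comp_eq_self
  refine ⟨LinearMap.toMatrix' g, toLin'.injective ?_⟩
  rwa [toLin'_mul, toLin'_mul, toLin'_toMatrix', LinearMap.comp_assoc]

theorem Matrix.mul_mul_eq_of_mulVec_mem_range {R l m n : Type*} [CommSemiring R] [Fintype l]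
    [Fintype m] [Fintype n] {A : Matrix l m R} {G : Matrix m l R} (hG : A * G * A = A)
    {M : Matrix l n R} (hM : ∀ v, M *ᵥ v ∈ LinearMap.range A.mulVecLin) : A * G * M = M := by
  refine ext_iff_mulVec.mpr fun v => ?_
  obtain ⟨x, hx⟩ := hM v
  rw [mulVecLin_apply] at hx
  rw [← mulVec_mulVec, ← hx, mulVec_mulVec, hG]

theorem matSub_range_mulVecLin {p q m n : ℕ} (A : Matrix (Fin p) (Fin m) ℝ)
    (B : Matrix (Fin n) (Fin q) ℝ) :
    matSub (LinearMap.range A.mulVecLin) (LinearMap.range Bᵀ.mulVecLin)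
      = LinearMap.range (mulRightLinearMap _ ℝ B ∘ₗ mulLeftLinearMap _ ℝ A) := by
  ext M
  simp only [LinearMap.mem_range, LinearMap.coe_comp, Function.comp_apply,
    mulLeftLinearMap_apply, mulRightLinearMap_apply]
  constructor
  · rintro ⟨hcol, hrow⟩
    obtain ⟨G, hG⟩ := A.exists_mul_mul_eq_self
    obtain ⟨H, hH⟩ := Bᵀ.exists_mul_mul_eq_self
    have hGM : A * G * M = M := mul_mul_eq_of_mulVec_mem_range hG hcol
    have hMH : M * Hᵀ * B = M := by
      simpa only [transpose_mul, transpose_transpose, Matrix.mul_assoc] using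
        congrArg transpose (mul_mul_eq_of_mulVec_mem_range hH hrow)
    exact ⟨G * M * Hᵀ, by rw [← Matrix.mul_assoc, ← Matrix.mul_assoc, hGM, hMH]⟩
  · rintro ⟨Δ, rfl⟩
    refine ⟨fun v => ⟨(Δ * B) *ᵥ v, ?_⟩, fun v => ⟨(A * Δ)ᵀ *ᵥ v, ?_⟩⟩
    · rw [mulVecLin_apply, mulVec_mulVec, Matrix.mul_assoc]
    · rw [mulVecLin_apply, mulVec_mulVec, transpose_mul (A * Δ)]

theorem LinearMap.range_eq_iSup_range_comp_single {R ι M : Type*} {φ : ι → Type*} [Semiring R]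
    [DecidableEq ι] [Finite ι] [∀ i, AddCommMonoid (φ i)] [∀ i, Module R (φ i)]
    [AddCommMonoid M] [Module R M] (f : (∀ i, φ i) →ₗ[R] M) :
    LinearMap.range f = ⨆ i, LinearMap.range (f ∘ₗ LinearMap.single R φ i) := by
  simp only [LinearMap.range_comp, ← Submodule.map_iSup, LinearMap.iSup_range_single,
    Submodule.map_top]

theorem dmu_comp_single (L : ℕ) (d : ℕ → ℕ)
    (W : ∀ j : ℕ, Matrix (Fin (d (j + 1))) (Fin (d j)) ℝ) (j0 : Fin L) :
    dmu L d W ∘ₗ LinearMap.single ℝ _ j0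
      = mulRightLinearMap _ ℝ (subseq d W 0 j0.1)
          ∘ₗ mulLeftLinearMap _ ℝ (subseq d W (j0.1 + 1) L) := by
  ext1 Δ
  simp only [dmu, LinearMap.coe_comp, LinearMap.coe_mk, AddHom.coe_mk, Function.comp_apply,
    LinearMap.coe_single, mulLeftLinearMap_apply, mulRightLinearMap_apply]
  rw [Finset.sum_eq_single j0 (fun i _ hi => by simp [Pi.single_eq_of_ne hi]) (by simp),
    Pi.single_eq_same]

/-- Lemma `coldmu`.
The image of the differential map `dμ(θ)` equals the vector sum
`Σ_{j=1}^{L} col(W_{L∼j}) ⊗ row(W_{j−1∼0})` of matrix subspaces of `ℝ^{d_L × d_0}`,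
where `U ⊗ V = {M : col M ⊆ U, row M ⊆ V}`. -/
theorem image_dmu (L : ℕ) (d : ℕ → ℕ)
    (W : ∀ j : ℕ, Matrix (Fin (d (j + 1))) (Fin (d j)) ℝ) :
    LinearMap.range (dmu L d W)
      = ⨆ j0 : Fin L,
          matSub (LinearMap.range (Matrix.mulVecLin (subseq d W (j0.1 + 1) L)))
            (LinearMap.range (Matrix.mulVecLin (subseq d W 0 j0.1)ᵀ)) := by
  simp only [LinearMap.range_eq_iSup_range_comp_single (dmu L d W), dmu_comp_single,
    matSub_range_mulVecLin]
end
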